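/- If E(t) = (1-γ)^t with γ = n(K-1)/(K(n-1)), 2 ≤ K = n^{1/c} in the sense that K^c ≥ n, then for t = b·c one has E(t) ≤ 1/n^b, for any naturals b ≥ 1, c ≥ 1. -/
import Mathlib


theorem stmt8 (n K c b : ℕ) (hn : 2 ≤ n) (hK : 2 ≤ K) (hc : 1 ≤ c) (hb : 1 ≤ b)
    (hKc : n ≤ K ^ c) (hKn : K ≤ n)
    (γ : ℝ) (hγ : γ = (n : ℝ) * ((K : ℝ) - 1) / (K * ((n : ℝ) - 1)))
    (E : ℕ → ℝ) (hE : ∀ t, E t = (1 - γ) ^ t) :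
    E (b * c) ≤ 1 / (n : ℝ) ^ b := by
  have hK0 : (0:ℝ) < (K:ℝ) := by exact_mod_cast Nat.lt_of_lt_of_le (by norm_num) hK
  have hn1 : (0:ℝ) < (n:ℝ) - 1 := by
    have : (2:ℝ) ≤ (n:ℝ) := by exact_mod_cast hn
    linarith
  have hK2 : (2:ℝ) ≤ (K:ℝ) := by exact_mod_cast hK
  have hKn' : (K:ℝ) ≤ (n:ℝ) := by exact_mod_cast hKn
  have hx0 : 0 ≤ 1 - γ := by
    rw [hγ]
    rw [sub_nonneg, div_le_one (by positivity)]
    nlinarith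
  have hx1 : 1 - γ ≤ 1 / (K:ℝ) := by
    have key : 1 - γ = ((n:ℝ) - K) / ((K:ℝ) * ((n:ℝ) - 1)) := by
      rw [hγ]; field_simp; ring
    rw [key, div_le_div_iff₀ (by positivity) hK0]
    nlinarith [mul_le_mul_of_nonneg_left (show (1:ℝ) ≤ (K:ℝ) by linarith) hK0.le]
  have h1 : E (b * c) ≤ (1 / (K:ℝ)) ^ (b * c) := by
    rw [hE]
    exact pow_le_pow_left₀ hx0 hx1 _
  have h2 : (1 / (K:ℝ)) ^ (b * c) = 1 / ((K:ℝ) ^ c) ^ b := by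
    rw [div_pow, one_pow, ← pow_mul, Nat.mul_comm]
  have h3 : (n:ℝ) ^ b ≤ ((K:ℝ) ^ c) ^ b := by
    apply pow_le_pow_left₀ (by positivity)
    exact_mod_cast hKc
  have h4 : (1:ℝ) / ((K:ℝ) ^ c) ^ b ≤ 1 / (n:ℝ) ^ b :=
    one_div_le_one_div_of_le (by positivity) h3
  linarith [h1, h2 ▸ h1]
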